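/- Let Z ⊆ ℝ^d be a zonotope with generator set 𝒢 all of whose extreme points lie in {0,1/2,1}^d. Then for every index i with 1 ≤ i ≤ d, at most two generators g ∈ 𝒢 have i-th coordinate g_i ≠ 0; moreover, if there are exactly two such generators, then the absolute value of the i-th coordinate of each of them equals 1/2. -/

import Mathlib

open Set Pointwise

noncomputable section

/-- `Z` is a zonotope with generator set `G`: `Z = t + Σ_{g ∈ G} conv{0,g}` for some
translation `t`, where the generators are nonzero and pairwise non-collinear. -/
def IsZonotopeWithGenerators {d : ℕ} (Z : Set (Fin d → ℝ)) (G : Finset (Fin d → ℝ)) : Prop :=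
  (∀ g ∈ G, g ≠ 0) ∧
  (∀ g ∈ G, ∀ h ∈ G, g ≠ h → ∀ r : ℝ, g ≠ r • h) ∧
  ∃ t : Fin d → ℝ,
    Z = {x | ∃ c : (Fin d → ℝ) → ℝ, (∀ g, 0 ≤ c g ∧ c g ≤ 1) ∧ x = t + ∑ g ∈ G, c g • g}

/-- A set is half-integral when all of its extreme points have coordinates in `{0,1/2,1}`. -/
def IsHalfIntegral {d : ℕ} (P : Set (Fin d → ℝ)) : Prop :=
  ∀ x ∈ Set.extremePoints ℝ P, ∀ i, x i = 0 ∨ x i = 1/2 ∨ x i = 1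

/-!
If a functional `f` vanishes on no generator, `t + ∑_{f g > 0} g` is the unique maximiser of `f`
on `Z`, hence a vertex; maximising `f + ε f'` for small `ε > 0` shows that the same holds when the
ties of `f` are broken by a second functional `f'`. With `f = ± x ↦ x i` and a generic
tie-breaker one gets two vertices whose `i`-th coordinates differ by `∑_g |g i|`, so this sum is
at most `1`. With `f` vanishing on exactly one generator `g₀` (possible as the generators are
pairwise non-collinear) and tie-breaker `± x ↦ x i`, the two vertices differ by `± g₀`, so a
nonzero `g₀ i` is a difference of two elements of `{0, 1/2, 1}` and `|g₀ i| ≥ 1/2`.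
-/

open Filter Topology Finset

theorem Module.Dual.exists_forall_apply_ne_zero (K : Type*) {V : Type*} [Field K] [Infinite K]
    [AddCommGroup V] [Module K V] (S : Finset V) (hS : ∀ v ∈ S, v ≠ 0) :
    ∃ y : Module.Dual K V, ∀ v ∈ S, y v ≠ 0 := by
  classical
  have hproper : ⊤ ∉ S.image fun v => LinearMap.ker (Module.Dual.eval K V v) := by
    simp only [Finset.mem_image, not_exists, not_and]
    intro v hv htop
    obtain ⟨f, hf⟩ := Module.Projective.exists_dual_ne_zero K (hS v hv)
    have hf' : f ∈ LinearMap.ker (Module.Dual.eval K V v) := htop ▸ Submodule.mem_top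
    exact hf hf'
  obtain ⟨y, hy⟩ := (Set.ne_univ_iff_exists_notMem _).1
    (Subspace.biUnion_ne_univ_of_top_notMem hproper)
  refine ⟨y, fun v hv hyv => hy ?_⟩
  exact Set.mem_biUnion (Finset.mem_image_of_mem _ hv) (by simpa using hyv)

theorem Module.Dual.exists_apply_eq_zero_forall_apply_ne_zero (K : Type*) {V : Type*} [Field K]
    [Infinite K] [AddCommGroup V] [Module K V] (v : V) (S : Finset V)
    (hS : ∀ w ∈ S, w ∉ K ∙ v) :
    ∃ y : Module.Dual K V, y v = 0 ∧ ∀ w ∈ S, y w ≠ 0 := by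
  classical
  obtain ⟨y, hy⟩ := Module.Dual.exists_forall_apply_ne_zero K (S.image (K ∙ v).mkQ) (by
    simp only [Finset.mem_image, forall_exists_index, and_imp, forall_apply_eq_imp_iff₂]
    intro w hw
    simpa using hS w hw)
  have hv : (K ∙ v).mkQ v = 0 :=
    (Submodule.Quotient.mk_eq_zero _).2 (Submodule.mem_span_singleton_self v)
  exact ⟨y.comp (K ∙ v).mkQ, by simp [hv], fun w hw => hy _ (Finset.mem_image_of_mem _ hw)⟩

lemma eventually_pos_add_mul_iff {a b : ℝ} (hab : a ≠ 0 ∨ b ≠ 0) :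
    ∀ᶠ ε in 𝓝[>] 0, a + ε * b ≠ 0 ∧ (0 < a + ε * b ↔ 0 < a ∨ a = 0 ∧ 0 < b) := by
  rcases eq_or_ne a 0 with rfl | ha
  · have hb := hab.resolve_left (not_not.2 rfl)
    filter_upwards [self_mem_nhdsWithin] with ε (hε : 0 < ε)
    simp [hb, hε.ne', mul_pos_iff_of_pos_left hε]
  have hlim : Tendsto (fun ε => a + ε * b) (𝓝[>] 0) (𝓝 a) := by
    have : Tendsto (fun ε : ℝ => a + ε * b) (𝓝 0) (𝓝 (a + 0 * b)) :=
      (continuous_const.add (continuous_id.mul continuous_const)).tendsto 0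
    simpa using this.mono_left nhdsWithin_le_nhds
  rcases ha.lt_or_gt with ha | ha
  · filter_upwards [hlim.eventually (gt_mem_nhds ha)] with ε hε
    exact ⟨hε.ne, iff_of_false (by linarith) (by rintro (h | ⟨rfl, -⟩) <;> linarith)⟩
  · filter_upwards [hlim.eventually (lt_mem_nhds ha)] with ε hε
    exact ⟨hε.ne', by simp [hε, ha]⟩

lemma mul_le_ite_pos {c : ℝ} (hc : 0 ≤ c ∧ c ≤ 1) (a : ℝ) :
    c * a ≤ if 0 < a then a else 0 := by
  split_ifs <;> nlinarith

lemma eq_ite_pos_of_mul_eq {c a : ℝ} (ha : a ≠ 0) (h : c * a = if 0 < a then a else 0) :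
    c = if 0 < a then 1 else 0 := by
  split_ifs at h ⊢
  · exact (mul_eq_right₀ ha).1 h
  · exact (mul_eq_zero.1 h).resolve_right ha

theorem Finset.card_le_two_of_half_le_of_sum_le_one {ι : Type*} (s : Finset ι) (a : ι → ℝ)
    (hhalf : ∀ x ∈ s, 1/2 ≤ a x) (hsum : ∑ x ∈ s, a x ≤ 1) :
    #s ≤ 2 ∧ (#s = 2 → ∀ x ∈ s, a x = 1/2) := by
  have hexcess : ∑ x ∈ s, (a x - 1/2) = ∑ x ∈ s, a x - #s / 2 := by
    rw [sum_sub_distrib, sum_const, nsmul_eq_mul]; ring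
  have hnonneg : ∀ x ∈ s, 0 ≤ a x - 1/2 := fun x hx => sub_nonneg.2 (hhalf x hx)
  have hcard : (#s : ℝ) ≤ 2 := by linarith [sum_nonneg hnonneg]
  refine ⟨by exact_mod_cast hcard, fun h2 x hx => le_antisymm ?_ (hhalf x hx)⟩
  have := single_le_sum hnonneg hx
  rw [hexcess, h2] at this
  linarith

section Zonotope

variable {E : Type*} [AddCommGroup E] [Module ℝ E]

theorem mem_extremePoints_of_unique_maximizer {A : Set E} {x : E} (f : Module.Dual ℝ E)
    (hx : x ∈ A) (hmax : ∀ y ∈ A, f y ≤ f x ∧ (f x ≤ f y → y = x)) :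
    x ∈ A.extremePoints ℝ := by
  have hf : ConvexOn ℝ univ f := f.convexOn convex_univ
  refine mem_extremePoints.2
    ⟨hx, fun x₁ h₁ x₂ h₂ hseg => ⟨(hmax x₁ h₁).2 ?_, (hmax x₂ h₂).2 ?_⟩⟩
  · exact hf.le_left_of_right_le (mem_univ _) (mem_univ _) hseg (hmax x₂ h₂).1
  · exact hf.le_right_of_left_le (mem_univ _) (mem_univ _) hseg (hmax x₁ h₁).1

def zonotope (t : E) (G : Finset E) : Set E :=
  {x | ∃ c : E → ℝ, (∀ g, 0 ≤ c g ∧ c g ≤ 1) ∧ x = t + ∑ g ∈ G, c g • g}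

variable (t : E) (G : Finset E)

theorem apply_le_apply_vertex_of_mem_zonotope (f : Module.Dual ℝ E) (hf : ∀ g ∈ G, f g ≠ 0) :
    ∀ x ∈ zonotope t G, f x ≤ f (t + ∑ g ∈ G with 0 < f g, g) ∧
      (f (t + ∑ g ∈ G with 0 < f g, g) ≤ f x → x = t + ∑ g ∈ G with 0 < f g, g) := by
  rintro _ ⟨c, hc, rfl⟩
  have hterm : ∀ g ∈ G, c g * f g ≤ if 0 < f g then f g else 0 :=
    fun g _ => mul_le_ite_pos (hc g) (f g)
  simp only [sum_filter, map_add, map_sum, map_smul, smul_eq_mul, apply_ite f, map_zero,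
    add_le_add_iff_left]
  refine ⟨sum_le_sum hterm, fun hle => ?_⟩
  have heq := (sum_eq_sum_iff_of_le hterm).1 (le_antisymm (sum_le_sum hterm) hle)
  congr 1
  refine sum_congr rfl fun g hg => ?_
  rw [eq_ite_pos_of_mul_eq (hf g hg) (heq g hg), ite_smul, one_smul, zero_smul]

theorem vertex_mem_extremePoints_zonotope (f : Module.Dual ℝ E) (hf : ∀ g ∈ G, f g ≠ 0) :
    t + ∑ g ∈ G with 0 < f g, g ∈ (zonotope t G).extremePoints ℝ := by
  refine mem_extremePoints_of_unique_maximizer f ⟨fun g => if 0 < f g then 1 else 0,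
    fun g => by dsimp only; split_ifs <;> norm_num, ?_⟩
    (apply_le_apply_vertex_of_mem_zonotope t G f hf)
  simp only [ite_smul, one_smul, zero_smul, sum_filter]

def lexVertex (f f' : Module.Dual ℝ E) : E :=
  t + ∑ g ∈ G with (0 < f g ∨ f g = 0 ∧ 0 < f' g), g

theorem lexVertex_mem_extremePoints_zonotope (f f' : Module.Dual ℝ E)
    (h : ∀ g ∈ G, f g ≠ 0 ∨ f' g ≠ 0) :
    lexVertex t G f f' ∈ (zonotope t G).extremePoints ℝ := by
  obtain ⟨ε, hε⟩ :=
    ((eventually_all_finset G).2 fun g hg => eventually_pos_add_mul_iff (h g hg)).exists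
  have hfilter : ({g ∈ G | 0 < (f + ε • f') g} : Finset E) =
      {g ∈ G | 0 < f g ∨ f g = 0 ∧ 0 < f' g} :=
    filter_congr fun g hg => by simpa using (hε g hg).2
  rw [lexVertex, ← hfilter]
  exact vertex_mem_extremePoints_zonotope t G _ fun g hg => by simpa using (hε g hg).1

theorem apply_lexVertex_sub_lexVertex_neg_left (φ y : Module.Dual ℝ E) :
    φ (lexVertex t G φ y) - φ (lexVertex t G (-φ) y) = ∑ g ∈ G, |φ g| := by
  simp only [lexVertex, map_add, map_sum, sum_filter, add_sub_add_left_eq_sub,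
    ← sum_sub_distrib]
  refine sum_congr rfl fun g _ => ?_
  rcases lt_trichotomy (φ g) 0 with h | h | h
  · simp [h, h.not_gt, h.ne, abs_of_neg h]
  · simp [h]
  · simp [h, h.not_gt, h.ne', abs_of_pos h]

theorem apply_lexVertex_sub_lexVertex_neg_right (y φ : Module.Dual ℝ E) :
    φ (lexVertex t G y φ) - φ (lexVertex t G y (-φ)) = ∑ g ∈ G with y g = 0, |φ g| := by
  simp only [lexVertex, map_add, map_sum, sum_filter, add_sub_add_left_eq_sub,
    ← sum_sub_distrib]
  refine sum_congr rfl fun g _ => ?_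
  rcases eq_or_ne (y g) 0 with hy | hy
  · rcases lt_trichotomy (φ g) 0 with h | h | h
    · simp [hy, h, h.not_gt, abs_of_neg h]
    · simp [h]
    · simp [hy, h, h.not_gt, abs_of_pos h]
  · simp [hy]

theorem sum_abs_apply_generators_le_one (hG : ∀ g ∈ G, g ≠ 0) (φ : Module.Dual ℝ E)
    (hφ : ∀ x ∈ (zonotope t G).extremePoints ℝ, φ x ∈ Set.Icc 0 1) :
    ∑ g ∈ G, |φ g| ≤ 1 := by
  obtain ⟨y, hy⟩ := Module.Dual.exists_forall_apply_ne_zero ℝ G hG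
  have hmax := hφ _ (lexVertex_mem_extremePoints_zonotope t G φ y fun g hg => .inr (hy g hg))
  have hmin := hφ _ (lexVertex_mem_extremePoints_zonotope t G (-φ) y fun g hg => .inr (hy g hg))
  rw [← apply_lexVertex_sub_lexVertex_neg_left]
  linarith [hmax.2, hmin.1]

theorem half_le_abs_apply_generator {g₀ : E} (hg₀ : g₀ ∈ G)
    (hG : ∀ g ∈ G, g ≠ g₀ → ∀ r : ℝ, g ≠ r • g₀) (φ : Module.Dual ℝ E)
    (hφ : ∀ x ∈ (zonotope t G).extremePoints ℝ, φ x = 0 ∨ φ x = 1/2 ∨ φ x = 1)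
    (hφg₀ : φ g₀ ≠ 0) : 1/2 ≤ |φ g₀| := by
  classical
  obtain ⟨y, hyg₀, hy⟩ :=
    Module.Dual.exists_apply_eq_zero_forall_apply_ne_zero ℝ g₀ (G.erase g₀) fun g hg hspan => by
      obtain ⟨r, rfl⟩ := Submodule.mem_span_singleton.1 hspan
      exact hG _ (mem_of_mem_erase hg) (ne_of_mem_erase hg) r rfl
  have hker : ({g ∈ G | y g = 0} : Finset E) = {g₀} := by
    ext g
    simp only [mem_filter, Finset.mem_singleton]
    refine ⟨fun ⟨hg, hyg⟩ => ?_, by rintro rfl; exact ⟨hg₀, hyg₀⟩⟩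
    by_contra hne
    exact hy g (mem_erase.2 ⟨hne, hg⟩) hyg
  have hlex : ∀ g ∈ G, y g ≠ 0 ∨ φ g ≠ 0 := fun g hg => by
    by_cases hne : g = g₀
    · exact .inr (hne ▸ hφg₀)
    · exact .inl (hy g (mem_erase.2 ⟨hne, hg⟩))
  have hmax := hφ _ (lexVertex_mem_extremePoints_zonotope t G y φ hlex)
  have hmin := hφ _ (lexVertex_mem_extremePoints_zonotope t G y (-φ) (by simpa using hlex))
  have hdiff := apply_lexVertex_sub_lexVertex_neg_right t G y φ
  rw [hker, sum_singleton] at hdiff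
  have hpos := abs_pos.2 hφg₀
  rcases hmax with h | h | h <;> rcases hmin with h' | h' | h' <;> rw [h, h'] at hdiff <;>
    linarith

end Zonotope

/-- For a half-integral zonotope with generator set `𝒢`: for each coordinate `i`, at most
two generators have nonzero `i`-th coordinate, and if there are exactly two, then the
absolute value of the `i`-th coordinate of each of them is `1/2`. -/
theorem halfIntegral_zonotope_generators_coord {d : ℕ} (Z : Set (Fin d → ℝ))
    (G : Finset (Fin d → ℝ)) (hZ : IsZonotopeWithGenerators Z G)
    (hHI : IsHalfIntegral Z) (i : Fin d) :
    {g : Fin d → ℝ | g ∈ G ∧ g i ≠ 0}.ncard ≤ 2 ∧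
      ({g : Fin d → ℝ | g ∈ G ∧ g i ≠ 0}.ncard = 2 →
        ∀ g ∈ G, g i ≠ 0 → |g i| = 1/2) := by
  obtain ⟨hG₀, hcol, t, rfl⟩ := hZ
  let φ : Module.Dual ℝ (Fin d → ℝ) := LinearMap.proj i
  have hφ : ∀ x ∈ (zonotope t G).extremePoints ℝ, φ x = 0 ∨ φ x = 1/2 ∨ φ x = 1 :=
    fun x hx => hHI x hx i
  have hhalf : ∀ g ∈ G.filter (· i ≠ 0), 1/2 ≤ |g i| := fun g hg =>
    half_le_abs_apply_generator t G (mem_filter.1 hg).1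
      (fun h hh => hcol h hh g (mem_filter.1 hg).1) φ hφ (mem_filter.1 hg).2
  have hsum : ∑ g ∈ G.filter (· i ≠ 0), |g i| ≤ 1 :=
    (sum_le_sum_of_subset_of_nonneg (filter_subset _ _) fun _ _ _ => abs_nonneg _).trans
      (sum_abs_apply_generators_le_one t G hG₀ φ fun x hx => by
        rcases hφ x hx with h | h | h <;> rw [h] <;> norm_num)
  have hsupport : {g : Fin d → ℝ | g ∈ G ∧ g i ≠ 0} = ↑(G.filter (· i ≠ 0)) := by
    ext; simp
  obtain ⟨hcard, hcard_two⟩ := card_le_two_of_half_le_of_sum_le_one _ _ hhalf hsum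
  rw [hsupport, ncard_coe_finset]
  exact ⟨hcard, fun h2 g hg hgi => hcard_two h2 g (mem_filter.2 ⟨hg, hgi⟩)⟩
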